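/- Let r ≥ 2 and H = K_r − e, the complete graph on r vertices with one edge removed. For every finite simple graph G of order n ≥ 1, the independence polynomial I(G∘H; x) is symmetric and unimodal, and its mode is unique and equal to n. -/

import Mathlib

open Polynomial Finset
open scoped Classical

/-- A set of vertices is independent if its elements are pairwise non-adjacent. -/
def IsIndepSet {V : Type*} (G : SimpleGraph V) (s : Finset V) : Prop :=
  ∀ u ∈ s, ∀ v ∈ s, u ≠ v → ¬ G.Adj u v

/-- The independence number: maximum cardinality of an independent set. -/
noncomputable def indepNum {V : Type*} [Fintype V] (G : SimpleGraph V) : ℕ :=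
  (Finset.univ.filter (fun s : Finset V => IsIndepSet G s)).sup Finset.card

/-- The number of independent sets of cardinality `k`. -/
noncomputable def indepCount {V : Type*} [Fintype V] (G : SimpleGraph V) (k : ℕ) : ℕ :=
  (Finset.univ.filter (fun s : Finset V => IsIndepSet G s ∧ s.card = k)).card

/-- The independence polynomial `I(G;x) = ∑ s_k x^k`. -/
noncomputable def indepPoly {V : Type*} [Fintype V] (G : SimpleGraph V) : Polynomial ℝ :=
  ∑ k ∈ Finset.range (indepNum G + 1), Polynomial.C (indepCount G k : ℝ) * Polynomial.X ^ k

/-- The corona `G ∘ H`: take `G` together with `|V(G)|` disjoint copies of `H`,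
joining each vertex `v` of `G` to all vertices of the `v`-th copy of `H`. -/
def corona {V W : Type*} (G : SimpleGraph V) (H : SimpleGraph W) :
    SimpleGraph (V ⊕ V × W) where
  Adj x y :=
    match x, y with
    | Sum.inl u, Sum.inl v => G.Adj u v
    | Sum.inl u, Sum.inr (v, _) => u = v
    | Sum.inr (v, _), Sum.inl u => u = v
    | Sum.inr (v, w), Sum.inr (v', w') => v = v' ∧ H.Adj w w'
  symm := by
    constructor
    rintro (u | ⟨v, w⟩) (u' | ⟨v', w'⟩) h
    · exact G.symm.symm _ _ h
    · exact h
    · exact h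
    · exact ⟨h.1.symm, H.symm.symm _ _ h.2⟩
  loopless := by
    constructor
    rintro (u | ⟨v, w⟩) h
    · exact G.loopless.irrefl u h
    · exact H.loopless.irrefl w h.2

/-- The disjoint union of two graphs. -/
def disjUnion {V W : Type*} (G : SimpleGraph V) (H : SimpleGraph W) :
    SimpleGraph (V ⊕ W) where
  Adj x y :=
    match x, y with
    | Sum.inl a, Sum.inl b => G.Adj a b
    | Sum.inr a, Sum.inr b => H.Adj a b
    | _, _ => False
  symm := by
    constructor
    rintro (a | a) (b | b) h
    · exact G.symm.symm _ _ h
    · exact h.elim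
    · exact h.elim
    · exact H.symm.symm _ _ h
  loopless := by
    constructor
    rintro (a | a) h
    · exact G.loopless.irrefl a h
    · exact H.loopless.irrefl a h

/-- The Zykov sum (join) of two graphs. -/
def zykovSum {V W : Type*} (G : SimpleGraph V) (H : SimpleGraph W) :
    SimpleGraph (V ⊕ W) where
  Adj x y :=
    match x, y with
    | Sum.inl a, Sum.inl b => G.Adj a b
    | Sum.inr a, Sum.inr b => H.Adj a b
    | _, _ => True
  symm := by
    constructor
    rintro (a | a) (b | b) h
    · exact G.symm.symm _ _ h
    · trivial
    · trivial
    · exact H.symm.symm _ _ h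
  loopless := by
    constructor
    rintro (a | a) h
    · exact G.loopless.irrefl a h
    · exact H.loopless.irrefl a h

/-- `K_p - e`: the complete graph on `Fin p` minus the edge joining vertices `0` and `1`. -/
def completeMinusEdge (p : ℕ) : SimpleGraph (Fin p) where
  Adj a b := a ≠ b ∧ ¬(a.val ≤ 1 ∧ b.val ≤ 1)
  symm := ⟨fun a b ⟨h1, h2⟩ => ⟨h1.symm, fun ⟨hb, ha⟩ => h2 ⟨ha, hb⟩⟩⟩
  loopless := ⟨fun a ⟨h, _⟩ => h rfl⟩

/-- The clique number of a graph. -/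
noncomputable def cliqueNum {V : Type*} [Fintype V] (G : SimpleGraph V) : ℕ :=
  (Finset.univ.filter (fun s : Finset V => G.IsClique ↑s)).sup Finset.card

/-- A graph is perfect if every induced subgraph has chromatic number
equal to its clique number. -/
def IsPerfect {V : Type*} [Fintype V] (G : SimpleGraph V) : Prop :=
  ∀ s : Set V, (G.induce s).chromaticNumber = (cliqueNum (G.induce s) : ℕ∞)

/-- The coefficient sequence `(a_0, …, a_n)` of a polynomial (indexed up to its
degree `n`) is symmetric, i.e. `a_i = a_{n-i}`. -/
def CoeffSymmetric (P : Polynomial ℝ) : Prop :=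
  ∀ i ≤ P.natDegree, P.coeff i = P.coeff (P.natDegree - i)

/-- The coefficient sequence of a polynomial is unimodal with mode `k`. -/
def IsMode (P : Polynomial ℝ) (k : ℕ) : Prop :=
  k ≤ P.natDegree ∧ (∀ i, i < k → P.coeff i ≤ P.coeff (i + 1)) ∧
    (∀ i, k ≤ i → i < P.natDegree → P.coeff (i + 1) ≤ P.coeff i)

/-- The coefficient sequence of a polynomial is unimodal. -/
def CoeffUnimodal (P : Polynomial ℝ) : Prop :=
  ∃ k, IsMode P k

/-- `k` is the unique index achieving the maximal coefficient of `P`. -/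
def IsUniqueMode (P : Polynomial ℝ) (k : ℕ) : Prop :=
  k ≤ P.natDegree ∧ ∀ j ≤ P.natDegree, j ≠ k → P.coeff j < P.coeff k

/-- The polynomial has a unique mode. -/
def HasUniqueMode (P : Polynomial ℝ) : Prop :=
  ∃ k, IsUniqueMode P k

/-!
An independent set of `G ∘ H` is an independent set `A` of `G` together with an independent set
in each copy of `H` lying over a vertex outside `A`, so
`I(G ∘ H) = ∑_A x^|A| I(H)^(n - |A|)`.
The independent sets of `K_r - e` are `∅`, the `r` singletons and the missing edge, so
`I(K_r - e) = 1 + r x + x² = (1 + x)² + (r - 2) x`, and the binomial theorem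
writes `I(G ∘ H)` as a combination with coefficients in `ℕ` of the polynomials
`x^a (1 + x)^(2(n - a))`, `a ≤ n`. Each of these has degree at most `2n` and coefficients
symmetric about `n` and nondecreasing up to `n`; the term `(1 + x)^(2n)`, coming from `A = ∅`,
is even strictly increasing up to `n`.
-/

lemma isIndepSet_empty {V : Type*} (G : SimpleGraph V) : IsIndepSet G ∅ := by
  simp [IsIndepSet]

section IndepPolynomial

variable {V : Type*} [Fintype V] (G : SimpleGraph V)

noncomputable def indepSets : Finset (Finset V) :=
  univ.filter (IsIndepSet G)

noncomputable def indepGenPoly : ℕ[X] :=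
  ∑ s ∈ indepSets G, X ^ s.card

lemma empty_mem_indepSets : ∅ ∈ indepSets G :=
  mem_filter.mpr ⟨mem_univ _, isIndepSet_empty G⟩

lemma coeff_indepGenPoly (k : ℕ) : (indepGenPoly G).coeff k = indepCount G k := by
  simp [indepGenPoly, indepSets, indepCount, coeff_X_pow, Finset.sum_boole,
    Finset.filter_filter, eq_comm]

lemma indepCount_zero : indepCount G 0 = 1 := by
  rw [indepCount, Finset.card_eq_one]
  refine ⟨∅, ?_⟩
  ext s
  simp only [mem_filter, mem_univ, true_and, card_eq_zero, mem_singleton, and_iff_right_iff_imp]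
  rintro rfl
  exact isIndepSet_empty G

lemma indepNum_eq_of_indepCount {k : ℕ} (hk : indepCount G k ≠ 0)
    (hgt : ∀ j, k < j → indepCount G j = 0) : indepNum G = k := by
  apply le_antisymm
  · refine Finset.sup_le fun s hs => not_lt.mp fun hks => ?_
    refine Finset.card_ne_zero.mpr ⟨s, ?_⟩ (hgt _ hks)
    exact mem_filter.mpr ⟨mem_univ _, (mem_filter.mp hs).2, rfl⟩
  · obtain ⟨s, hs⟩ := Finset.card_ne_zero.mp hk
    obtain ⟨-, hind, rfl⟩ := mem_filter.mp hs
    exact Finset.le_sup (f := Finset.card) (mem_filter.mpr ⟨mem_univ _, hind⟩)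

end IndepPolynomial

section Corona

variable {V W : Type*} [Fintype V] [Fintype W]

noncomputable def piFinsetEquivFinsetProd : (V → Finset W) ≃ Finset (V × W) where
  toFun g := univ.filter fun p => p.2 ∈ g p.1
  invFun s v := univ.filter fun w => (v, w) ∈ s
  left_inv g := by ext; simp
  right_inv s := by ext; simp

@[simp]
lemma mem_piFinsetEquivFinsetProd {g : V → Finset W} {p : V × W} :
    p ∈ piFinsetEquivFinsetProd g ↔ p.2 ∈ g p.1 := by
  simp [piFinsetEquivFinsetProd]

lemma card_piFinsetEquivFinsetProd (g : V → Finset W) :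
    (piFinsetEquivFinsetProd g).card = ∑ v, (g v).card := by
  rw [piFinsetEquivFinsetProd, Equiv.coe_fn_mk, Finset.card_filter, Fintype.sum_prod_type]
  simp

noncomputable def coronaVertexSetEquiv : Finset V × (V → Finset W) ≃ Finset (V ⊕ V × W) :=
  (Equiv.prodCongr (Equiv.refl _) piFinsetEquivFinsetProd).trans Finset.sumEquiv.toEquiv.symm

lemma coronaVertexSetEquiv_apply (A : Finset V) (g : V → Finset W) :
    coronaVertexSetEquiv (A, g) = A.disjSum (piFinsetEquivFinsetProd g) := rfl

lemma card_coronaVertexSetEquiv (A : Finset V) (g : V → Finset W) :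
    (coronaVertexSetEquiv (A, g)).card = A.card + ∑ v, (g v).card := by
  rw [coronaVertexSetEquiv_apply, card_disjSum, card_piFinsetEquivFinsetProd]

lemma isIndepSet_corona_iff (G : SimpleGraph V) (H : SimpleGraph W) (A : Finset V)
    (g : V → Finset W) :
    IsIndepSet (corona G H) (coronaVertexSetEquiv (A, g)) ↔
      IsIndepSet G A ∧ (∀ v ∈ A, g v = ∅) ∧ ∀ v, IsIndepSet H (g v) := by
  simp only [coronaVertexSetEquiv_apply]
  constructor
  · intro hS
    refine ⟨fun u hu v hv huv => hS (.inl u) (by simpa) (.inl v) (by simpa) (by simpa),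
      fun v hv => eq_empty_of_forall_notMem fun w hw => ?_,
      fun v w hw w' hw' hww' hadj => ?_⟩
    · exact hS (.inl v) (by simpa) (.inr (v, w)) (by simpa) Sum.inl_ne_inr rfl
    · exact hS (.inr (v, w)) (by simpa) (.inr (v, w')) (by simpa) (by simpa) ⟨rfl, hadj⟩
  · rintro ⟨hA, hAg, hg⟩
    have hempty : ∀ v ∈ A, ∀ w, w ∉ g v := fun v hv w => by simp [hAg v hv]
    rintro (u | ⟨v, w⟩) hx (u' | ⟨v', w'⟩) hy hne hadj <;>
      simp only [inl_mem_disjSum, inr_mem_disjSum, mem_piFinsetEquivFinsetProd] at hx hy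
    · exact hA u hx u' hy (by simpa using hne) hadj
    · obtain rfl : u = v' := hadj
      exact hempty u hx w' hy
    · obtain rfl : u' = v := hadj
      exact hempty u' hy w hx
    · obtain ⟨rfl, hadj⟩ := hadj
      exact hg v w hx w' hy (by simpa using hne) hadj

theorem indepGenPoly_corona (G : SimpleGraph V) (H : SimpleGraph W) :
    indepGenPoly (corona G H) =
      ∑ A ∈ indepSets G, X ^ A.card * indepGenPoly H ^ (Fintype.card V - A.card) := by
  let slot (A : Finset V) (v : V) : Finset (Finset W) := if v ∈ A then {∅} else indepSets H
  have mem_slot (A : Finset V) (g : V → Finset W) :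
      g ∈ Fintype.piFinset (slot A) ↔
        (∀ v ∈ A, g v = ∅) ∧ ∀ v, IsIndepSet H (g v) := by
    have mem_slot_apply (v : V) :
        g v ∈ slot A v ↔ (v ∈ A → g v = ∅) ∧ IsIndepSet H (g v) := by
      by_cases hv : v ∈ A
      · simp +contextual [slot, hv, isIndepSet_empty]
      · simp [slot, hv, indepSets]
    simp only [Fintype.mem_piFinset, mem_slot_apply, forall_and]
  have sum_slot (A : Finset V) :
      ∏ v, ∑ b ∈ slot A v, (X : ℕ[X]) ^ b.card =
        indepGenPoly H ^ (Fintype.card V - A.card) := by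
    have (v : V) :
        ∑ b ∈ slot A v, (X : ℕ[X]) ^ b.card = if v ∈ A then 1 else indepGenPoly H := by
      by_cases hv : v ∈ A <;> simp [slot, hv, indepGenPoly]
    simp [this, prod_ite, filter_notMem_eq_sdiff, card_univ_sdiff]
  calc indepGenPoly (corona G H)
      = ∑ p : Finset V × (V → Finset W), if IsIndepSet (corona G H) (coronaVertexSetEquiv p)
          then X ^ (coronaVertexSetEquiv p).card else 0 := by
        rw [indepGenPoly, indepSets, sum_filter]
        exact (Fintype.sum_equiv coronaVertexSetEquiv _ _ fun _ => rfl).symm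
    _ = ∑ A ∈ indepSets G, ∑ g ∈ Fintype.piFinset (slot A),
          X ^ A.card * ∏ v, X ^ (g v).card := by
        rw [Fintype.sum_prod_type, indepSets, sum_filter]
        refine sum_congr rfl fun A _ => ?_
        simp only [isIndepSet_corona_iff, card_coronaVertexSetEquiv, ← mem_slot, pow_add,
          ← prod_pow_eq_pow_sum]
        split_ifs with hA
        · simp only [hA, true_and]
          rw [← sum_filter, filter_mem_eq_inter, univ_inter]
        · simp [hA]
    _ = _ := sum_congr rfl fun A _ => by rw [← mul_sum, ← sum_slot, prod_univ_sum]

end Corona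

section CompleteMinusEdge

variable {r : ℕ} (hr : 2 ≤ r)
include hr

lemma isIndepSet_completeMinusEdge_iff (s : Finset (Fin r)) :
    IsIndepSet (completeMinusEdge r) s ↔
      s.card ≤ 1 ∨ s = {⟨0, by omega⟩, ⟨1, by omega⟩} := by
  constructor
  · intro hs
    refine (le_or_gt s.card 1).imp id fun hcard => eq_of_subset_of_card_le (fun z hz => ?_) ?_
    · obtain ⟨y, hy, hyz⟩ := exists_mem_ne hcard z
      have := hs z hz y hy hyz.symm
      simp only [completeMinusEdge, ne_eq, hyz.symm, not_false_eq_true, true_and, not_not] at this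
      simp [Fin.ext_iff]
      omega
    · exact (card_le_two).trans hcard
  · rintro (hs | rfl) u hu v hv huv hadj
    · exact huv (card_le_one.mp hs u hu v hv)
    · simp only [mem_insert, mem_singleton] at hu hv
      exact hadj.2 ⟨by rcases hu with rfl | rfl <;> simp, by rcases hv with rfl | rfl <;> simp⟩

theorem indepGenPoly_completeMinusEdge :
    indepGenPoly (completeMinusEdge r) = 1 + (r : ℕ[X]) * X + X ^ 2 := by
  set e : Finset (Fin r) := {⟨0, by omega⟩, ⟨1, by omega⟩} with he
  have card_e : e.card = 2 := card_pair (by simp [Fin.ext_iff])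
  have : indepSets (completeMinusEdge r) =
      insert ∅ (insert e (univ.map ⟨singleton, singleton_injective⟩)) := by
    ext s
    simp only [indepSets, mem_filter, mem_univ, true_and, isIndepSet_completeMinusEdge_iff hr,
      mem_insert, mem_map, Function.Embedding.coeFn_mk, ← he]
    rw [Nat.le_one_iff_eq_zero_or_eq_one, card_eq_zero, card_eq_one]
    aesop
  have he_ne : e ∉ univ.map ⟨singleton, singleton_injective⟩ := by
    simp only [mem_map, mem_univ, true_and, Function.Embedding.coeFn_mk, not_exists]
    intro a ha
    simp [← ha] at card_e
  rw [indepGenPoly, this, sum_insert, sum_insert he_ne, sum_map]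
  · simp [card_e]
    ring
  · simp [eq_comm (a := ∅), ← card_eq_zero, card_e]

end CompleteMinusEdge

lemma strictMonoOn_choose_two_mul (q : ℕ) : StrictMonoOn (Nat.choose (2 * q)) (Set.Iic q) :=
  strictMonoOn_Iic_of_lt_succ fun k hk => by
    have key := Nat.choose_succ_right_eq (2 * q) k
    have hpos := Nat.choose_pos (show k ≤ 2 * q by omega)
    have hk2 : k + 2 ≤ 2 * q - k := by omega
    rw [Order.succ_eq_add_one]
    nlinarith

section SymmUnimodal

def symmUnimodal (n : ℕ) : AddSubmonoid ℕ[X] where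
  carrier := {P | (∀ k, 2 * n < k → P.coeff k = 0) ∧
    (∀ i j, i + j = 2 * n → P.coeff i = P.coeff j) ∧ MonotoneOn P.coeff (Set.Iic n)}
  add_mem' := by
    rintro P Q ⟨hP0, hPs, hPm⟩ ⟨hQ0, hQs, hQm⟩
    refine ⟨fun k hk => ?_, fun i j h => ?_, ?_⟩
    · simp [hP0 k hk, hQ0 k hk]
    · simp [hPs i j h, hQs i j h]
    · intro i hi j hj hij
      simp only [coeff_add]
      exact add_le_add (hPm hi hj hij) (hQm hi hj hij)
  zero_mem' := ⟨by simp, by simp, fun _ _ _ _ _ => le_rfl⟩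

lemma X_pow_mul_mem_symmUnimodal {p : ℕ} {P : ℕ[X]} (hP : P ∈ symmUnimodal p) (a : ℕ) :
    X ^ a * P ∈ symmUnimodal (a + p) := by
  obtain ⟨hP0, hPs, hPm⟩ := hP
  refine ⟨fun k hk => ?_, fun i j h => ?_, fun i hi j hj hij => ?_⟩ <;>
    simp only [coeff_X_pow_mul']
  · split_ifs
    exacts [hP0 _ (by omega), rfl]
  · split_ifs
    exacts [hPs _ _ (by omega), hP0 _ (by omega), (hP0 _ (by omega)).symm, rfl]
  · simp only [Set.mem_Iic] at hi hj
    split_ifs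
    exacts [hPm (by simp; omega) (by simp; omega) (by omega), by omega, Nat.zero_le _, le_rfl]

lemma strictMonoOn_coeff_one_add_X_pow (q : ℕ) :
    StrictMonoOn ((1 + X : ℕ[X]) ^ (2 * q)).coeff (Set.Iic q) := fun i hi j hj hij => by
  simpa only [coeff_one_add_X_pow, Nat.cast_id] using strictMonoOn_choose_two_mul q hi hj hij

lemma one_add_X_pow_mem_symmUnimodal (q : ℕ) : (1 + X) ^ (2 * q) ∈ symmUnimodal q := by
  refine ⟨fun k hk => ?_, fun i j h => ?_, (strictMonoOn_coeff_one_add_X_pow q).monotoneOn⟩ <;>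
    simp only [coeff_one_add_X_pow, Nat.cast_id]
  exacts [Nat.choose_eq_zero_of_lt hk, Nat.choose_symm_of_eq_add h.symm]

lemma StrictMonoOn.coeff_add_of_mem_symmUnimodal {n : ℕ} {P Q : ℕ[X]}
    (hP : StrictMonoOn P.coeff (Set.Iic n)) (hQ : Q ∈ symmUnimodal n) :
    StrictMonoOn (P + Q).coeff (Set.Iic n) := by
  intro i hi j hj hij
  simp only [coeff_add]
  exact add_lt_add_of_lt_of_le (hP hi hj hij) (hQ.2.2 hi hj hij.le)

theorem trinomial_pow_symmUnimodal (s p : ℕ) :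
    ((1 + X) ^ 2 + (s : ℕ[X]) * X) ^ p ∈ symmUnimodal p ∧
      StrictMonoOn (((1 + X) ^ 2 + (s : ℕ[X]) * X) ^ p).coeff (Set.Iic p) := by
  have hterm : ∀ j ∈ range (p + 1),
      ((s : ℕ[X]) * X) ^ j * ((1 + X) ^ 2) ^ (p - j) * (p.choose j : ℕ[X]) ∈
        symmUnimodal p := by
    intro j hj
    have hjp : j ≤ p := Nat.lt_succ_iff.mp (mem_range.mp hj)
    have := nsmul_mem (X_pow_mul_mem_symmUnimodal (one_add_X_pow_mem_symmUnimodal (p - j)) j)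
      (s ^ j * p.choose j)
    rw [Nat.add_sub_cancel' hjp, nsmul_eq_mul] at this
    have expand : ((s : ℕ[X]) * X) ^ j * ((1 + X) ^ 2) ^ (p - j) * (p.choose j : ℕ[X]) =
        ((s ^ j * p.choose j : ℕ) : ℕ[X]) * (X ^ j * (1 + X) ^ (2 * (p - j))) := by
      simp only [Nat.cast_mul, Nat.cast_pow, pow_mul]
      ring
    rwa [expand]
  rw [add_comm ((1 + X) ^ 2), add_pow]
  refine ⟨sum_mem hterm, ?_⟩
  rw [sum_range_succ', add_comm]
  simp only [pow_zero, one_mul, Nat.sub_zero, Nat.choose_zero_right, Nat.cast_one, mul_one]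
  rw [← pow_mul]
  exact (strictMonoOn_coeff_one_add_X_pow p).coeff_add_of_mem_symmUnimodal
    (sum_mem fun j hj => hterm (j + 1) (mem_range.mpr (Nat.succ_lt_succ (mem_range.mp hj))))

end SymmUnimodal

theorem indepGenPoly_corona_completeMinusEdge_symmUnimodal {V : Type*} [Fintype V] {r : ℕ}
    (hr : 2 ≤ r) (G : SimpleGraph V) :
    indepGenPoly (corona G (completeMinusEdge r)) ∈ symmUnimodal (Fintype.card V) ∧
      StrictMonoOn (indepGenPoly (corona G (completeMinusEdge r))).coeff
        (Set.Iic (Fintype.card V)) := by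
  have hQ : 1 + (r : ℕ[X]) * X + X ^ 2 = (1 + X) ^ 2 + ((r - 2 : ℕ) : ℕ[X]) * X := by
    obtain ⟨t, rfl⟩ := Nat.exists_eq_add_of_le hr
    rw [Nat.add_sub_cancel_left]
    push_cast
    ring
  set Q := (1 + X) ^ 2 + ((r - 2 : ℕ) : ℕ[X]) * X
  have hterm (A : Finset V) :
      X ^ A.card * Q ^ (Fintype.card V - A.card) ∈ symmUnimodal (Fintype.card V) := by
    have := X_pow_mul_mem_symmUnimodal
      (trinomial_pow_symmUnimodal (r - 2) (Fintype.card V - A.card)).1 A.card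
    rwa [Nat.add_sub_cancel' (card_le_univ A)] at this
  rw [indepGenPoly_corona, indepGenPoly_completeMinusEdge hr, hQ]
  refine ⟨sum_mem fun A _ => hterm A, ?_⟩
  rw [← add_sum_erase _ _ (empty_mem_indepSets G), card_empty, pow_zero,
    one_mul, Nat.sub_zero]
  exact (trinomial_pow_symmUnimodal (r - 2) _).2.coeff_add_of_mem_symmUnimodal
    (sum_mem fun A _ => hterm A)

lemma strictAntiOn_of_symm_of_strictMonoOn {α : Type*} [Preorder α] {f : ℕ → α} {n : ℕ}
    (hsymm : ∀ i j, i + j = 2 * n → f i = f j) (hf : StrictMonoOn f (Set.Iic n)) :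
    StrictAntiOn f (Set.Icc n (2 * n)) := by
  intro i hi j hj hij
  simp only [Set.mem_Icc] at hi hj
  rw [hsymm i (2 * n - i) (by omega), hsymm j (2 * n - j) (by omega)]
  exact hf (by simp; omega) (by simp; omega) (by omega)

theorem corona_completeMinusEdge_symmetric_unimodal_general {V : Type*} [Fintype V]
    (G : SimpleGraph V) (n : ℕ) (hn : Fintype.card V = n)
    (r : ℕ) (hr : 2 ≤ r) :
    let s := indepCount (corona G (completeMinusEdge r))
    let α := indepNum (corona G (completeMinusEdge r))
    (∀ i ≤ α, s i = s (α - i)) ∧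
      (∀ i, i < n → s i ≤ s (i + 1)) ∧
      (∀ i, n ≤ i → i < α → s (i + 1) ≤ s i) ∧
      (∀ j ≤ α, j ≠ n → s j < s n) := by
  subst hn
  intro s α
  obtain ⟨⟨hzero, hsymm, -⟩, hmono⟩ :=
    indepGenPoly_corona_completeMinusEdge_symmUnimodal hr G
  have hs : s = (indepGenPoly (corona G (completeMinusEdge r))).coeff :=
    funext fun k => (coeff_indepGenPoly _ k).symm
  have hα : α = 2 * Fintype.card V := by
    refine indepNum_eq_of_indepCount _ ?_ fun j hj => ?_
    · rw [← coeff_indepGenPoly, ← hsymm 0 _ (zero_add _), coeff_indepGenPoly, indepCount_zero]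
      exact one_ne_zero
    · rw [← coeff_indepGenPoly, hzero j hj]
  have hanti := strictAntiOn_of_symm_of_strictMonoOn hsymm hmono
  rw [hs, hα]
  refine ⟨fun i hi => hsymm _ _ (by omega),
    fun i hi => (hmono (by simp; omega) (by simp; omega) (by omega)).le,
    fun i hi hi' => (hanti (by simp; omega) (by simp; omega) (by omega)).le,
    fun j hj hjn => ?_⟩
  rcases lt_or_gt_of_ne hjn with hlt | hgt
  · exact hmono (by simp; omega) (by simp) hlt
  · exact hanti (by simp; omega) (by simp; omega) hgt

/-- for `H = K_r - e` (`r ≥ 2`) and `G` of order `n ≥ 1`, `I(G∘H; x)` is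
symmetric and unimodal, and its mode is unique and equal to `n`. -/
theorem corona_completeMinusEdge_symmetric_unimodal {V : Type*} [Fintype V]
    (G : SimpleGraph V) (n : ℕ) (hn : Fintype.card V = n) (hn1 : 1 ≤ n)
    (r : ℕ) (hr : 2 ≤ r) :
    let s := indepCount (corona G (completeMinusEdge r))
    let α := indepNum (corona G (completeMinusEdge r))
    (∀ i ≤ α, s i = s (α - i)) ∧
      (∀ i, i < n → s i ≤ s (i + 1)) ∧
      (∀ i, n ≤ i → i < α → s (i + 1) ≤ s i) ∧
      (∀ j ≤ α, j ≠ n → s j < s n) :=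
  corona_completeMinusEdge_symmetric_unimodal_general G n hn r hr
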